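/- arXiv:1604.06994 — 5 statements merged into one kernel-verified Lean document; each statement's English description precedes it below -/
import Mathlib

section
/- Let J₀, J₁ be complex structures on a finite-dimensional real inner product space, T₀ = (J₀+J₁)/2, and let v be an eigenvector of T₀ᵀT₀ with eigenvalue λ ∈ (0,1). Then w = T₁ᵀT₀ v (where T₁ = (J₀-J₁)/2) is also an eigenvector of T₀ᵀT₀ with eigenvalue λ, and ‖w‖² = λ(1-λ)‖v‖² ≠ 0. -/
/-!
We work in `Module.End ℝ H`, where `star` is `LinearMap.adjoint`. For skew-adjoint `T₀, T₁`
the identity `T₀ᵀT₁ + T₁ᵀT₀ = 0` says that `T₀` and `T₁` anticommute, so `A = T₀ᵀT₀ = -T₀²`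
commutes with `T₀` and with `T₁ᵀ`; hence `T₁ᵀT₀` maps the `λ`-eigenspace of `A` to itself.
For `x` in that eigenspace `‖T₀ x‖² = ⟪x, A x⟫ = λ‖x‖²`, and for `u = T₀ v` the identity
`T₀ᵀT₀ + T₁ᵀT₁ = 1` gives `‖T₁ᵀ u‖² = ‖T₁ u‖² = ⟪u, (1 - A) u⟫ = (1 - λ)‖u‖² = λ(1 - λ)‖v‖²`.
-/

open LinearMap Module.End
open scoped InnerProductSpace

section StarRing

variable {R : Type*} [Ring R] [StarRing R] {a b : R}

theorem commute_star_mul_self_self (ha : a ∈ skewAdjoint R) : Commute (star a * a) a := by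
  rw [skewAdjoint.mem_iff.1 ha, neg_mul]
  exact ((Commute.refl a).mul_left (Commute.refl a)).neg_left

theorem commute_star_mul_self_star (ha : a ∈ skewAdjoint R) (hb : b ∈ skewAdjoint R)
    (hab : star a * b + star b * a = 0) : Commute (star a * a) (star b) := by
  rw [skewAdjoint.mem_iff.1 ha, skewAdjoint.mem_iff.1 hb] at hab ⊢
  have hab' : a * b = -(b * a) := by
    refine eq_neg_of_add_eq_zero_left (neg_eq_zero.1 ?_)
    rwa [neg_add, ← neg_mul, ← neg_mul]
  simp only [Commute, SemiconjBy, neg_mul, mul_neg, neg_neg]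
  rw [mul_assoc, hab', mul_neg, ← mul_assoc, hab', neg_mul, neg_neg, mul_assoc]

end StarRing

section ComplexStructures

variable {A : Type*} [Ring A] [StarRing A] [Algebra ℝ A] [StarModule ℝ A] {a b : A}

theorem star_mul_self_add_star_mul_self_half_smul (ha : a ∈ skewAdjoint A)
    (hb : b ∈ skewAdjoint A) (ha2 : a * a = -1) (hb2 : b * b = -1) :
    star ((2 : ℝ)⁻¹ • (a + b)) * ((2 : ℝ)⁻¹ • (a + b)) +
      star ((2 : ℝ)⁻¹ • (a - b)) * ((2 : ℝ)⁻¹ • (a - b)) = 1 := by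
  rw [skewAdjoint.mem_iff.1 (skewAdjoint.smul_mem _ (add_mem ha hb)),
    skewAdjoint.mem_iff.1 (skewAdjoint.smul_mem _ (sub_mem ha hb))]
  have : (a + b) * (a + b) + (a - b) * (a - b) = (2 : ℝ) • (a * a + b * b) := by
    rw [two_smul]; noncomm_ring
  simp only [neg_mul, smul_mul_smul, ← neg_add, ← smul_add, this, ha2, hb2, smul_neg, neg_neg,
    ← two_smul ℝ, smul_smul]
  norm_num

theorem star_mul_add_star_mul_half_smul (ha : a ∈ skewAdjoint A) (hb : b ∈ skewAdjoint A)
    (hab : a * a = b * b) :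
    star ((2 : ℝ)⁻¹ • (a + b)) * ((2 : ℝ)⁻¹ • (a - b)) +
      star ((2 : ℝ)⁻¹ • (a - b)) * ((2 : ℝ)⁻¹ • (a + b)) = 0 := by
  rw [skewAdjoint.mem_iff.1 (skewAdjoint.smul_mem _ (add_mem ha hb)),
    skewAdjoint.mem_iff.1 (skewAdjoint.smul_mem _ (sub_mem ha hb))]
  have : (a + b) * (a - b) + (a - b) * (a + b) = (2 : ℝ) • (a * a - b * b) := by
    rw [two_smul]; noncomm_ring
  simp only [neg_mul, smul_mul_smul, ← neg_add, ← smul_add, this, hab, sub_self, smul_zero,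
    neg_zero]

end ComplexStructures

section InnerProductSpace

variable {H : Type*} [NormedAddCommGroup H] [InnerProductSpace ℝ H] [FiniteDimensional ℝ H]
  {T₀ T₁ : Module.End ℝ H} {lam : ℝ} {v : H}

theorem norm_sq_apply_eq_inner_star_mul_self (T : Module.End ℝ H) (x : H) :
    ‖T x‖ ^ 2 = ⟪x, (star T * T) x⟫_ℝ := by
  rw [← real_inner_self_eq_norm_sq, star_eq_adjoint, mul_apply, adjoint_inner_right]

theorem norm_sq_apply_of_mem_eigenspace_star_mul_self
    (hv : v ∈ eigenspace (star T₀ * T₀) lam) : ‖T₀ v‖ ^ 2 = lam * ‖v‖ ^ 2 := by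
  rw [norm_sq_apply_eq_inner_star_mul_self, mem_eigenspace_iff.1 hv, real_inner_smul_right,
    real_inner_self_eq_norm_sq]

theorem apply_mem_eigenspace_star_mul_self (h₀ : T₀ ∈ skewAdjoint (Module.End ℝ H))
    (hv : v ∈ eigenspace (star T₀ * T₀) lam) : T₀ v ∈ eigenspace (star T₀ * T₀) lam :=
  mapsTo_genEigenspace_of_comm (commute_star_mul_self_self h₀) lam 1 hv

theorem star_mul_apply_mem_eigenspace_star_mul_self (h₀ : T₀ ∈ skewAdjoint (Module.End ℝ H))
    (h₁ : T₁ ∈ skewAdjoint (Module.End ℝ H)) (hcross : star T₀ * T₁ + star T₁ * T₀ = 0)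
    (hv : v ∈ eigenspace (star T₀ * T₀) lam) :
    (star T₁ * T₀) v ∈ eigenspace (star T₀ * T₀) lam :=
  mapsTo_genEigenspace_of_comm (commute_star_mul_self_star h₀ h₁ hcross) lam 1
    (apply_mem_eigenspace_star_mul_self h₀ hv)

theorem norm_sq_star_mul_apply_of_mem_eigenspace (h₀ : T₀ ∈ skewAdjoint (Module.End ℝ H))
    (h₁ : T₁ ∈ skewAdjoint (Module.End ℝ H)) (hsum : star T₀ * T₀ + star T₁ * T₁ = 1)
    (hv : v ∈ eigenspace (star T₀ * T₀) lam) :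
    ‖(star T₁ * T₀) v‖ ^ 2 = lam * (1 - lam) * ‖v‖ ^ 2 := by
  have hu := apply_mem_eigenspace_star_mul_self h₀ hv
  calc ‖(star T₁ * T₀) v‖ ^ 2 = ‖T₁ (T₀ v)‖ ^ 2 := by
        rw [mul_apply, skewAdjoint.mem_iff.1 h₁, LinearMap.neg_apply, norm_neg]
    _ = ‖T₀ v‖ ^ 2 - ‖T₀ (T₀ v)‖ ^ 2 := by
        rw [norm_sq_apply_eq_inner_star_mul_self, eq_sub_of_add_eq' hsum, LinearMap.sub_apply,
          one_apply, inner_sub_right, real_inner_self_eq_norm_sq,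
          ← norm_sq_apply_eq_inner_star_mul_self]
    _ = lam * (1 - lam) * ‖v‖ ^ 2 := by
        rw [norm_sq_apply_of_mem_eigenspace_star_mul_self hu,
          norm_sq_apply_of_mem_eigenspace_star_mul_self hv]
        ring

end InnerProductSpace

/-- If `v` is an eigenvector of `T₀ᵀT₀` with eigenvalue `λ ∈ (0,1)`, where
`T₀ = (J₀+J₁)/2` for complex structures `J₀, J₁`, then `w = T₁ᵀT₀ v` with
`T₁ = (J₀-J₁)/2` is again an eigenvector with eigenvalue `λ`, and
`‖w‖² = λ(1-λ)‖v‖² ≠ 0`. -/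
theorem eigenvector_partner {H : Type*} [NormedAddCommGroup H]
    [InnerProductSpace ℝ H] [FiniteDimensional ℝ H]
    (J₀ J₁ : H →ₗ[ℝ] H)
    (h0sq : J₀ ∘ₗ J₀ = -LinearMap.id) (h0sk : LinearMap.adjoint J₀ = -J₀)
    (h1sq : J₁ ∘ₗ J₁ = -LinearMap.id) (h1sk : LinearMap.adjoint J₁ = -J₁)
    (T₀ T₁ : H →ₗ[ℝ] H)
    (hT₀ : T₀ = (2 : ℝ)⁻¹ • (J₀ + J₁)) (hT₁ : T₁ = (2 : ℝ)⁻¹ • (J₀ - J₁))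
    (lam : ℝ) (hlam0 : 0 < lam) (hlam1 : lam < 1)
    (v : H) (hv : v ≠ 0) (heig : (LinearMap.adjoint T₀ ∘ₗ T₀) v = lam • v)
    (w : H) (hw : w = (LinearMap.adjoint T₁ ∘ₗ T₀) v) :
    (LinearMap.adjoint T₀ ∘ₗ T₀) w = lam • w ∧
    ‖w‖ ^ 2 = lam * (1 - lam) * ‖v‖ ^ 2 ∧ w ≠ 0 := by
  have hJ₀ : J₀ ∈ skewAdjoint (Module.End ℝ H) := skewAdjoint.mem_iff.2 h0sk
  have hJ₁ : J₁ ∈ skewAdjoint (Module.End ℝ H) := skewAdjoint.mem_iff.2 h1sk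
  have h₀ : T₀ ∈ skewAdjoint (Module.End ℝ H) := hT₀ ▸ skewAdjoint.smul_mem _ (add_mem hJ₀ hJ₁)
  have h₁ : T₁ ∈ skewAdjoint (Module.End ℝ H) := hT₁ ▸ skewAdjoint.smul_mem _ (sub_mem hJ₀ hJ₁)
  have hsum : star T₀ * T₀ + star T₁ * T₁ = 1 :=
    hT₀ ▸ hT₁ ▸ star_mul_self_add_star_mul_self_half_smul hJ₀ hJ₁ h0sq h1sq
  have hcross : star T₀ * T₁ + star T₁ * T₀ = 0 :=
    hT₀ ▸ hT₁ ▸ star_mul_add_star_mul_half_smul hJ₀ hJ₁ (h0sq.trans h1sq.symm)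
  have hv' : v ∈ eigenspace (star T₀ * T₀) lam := mem_eigenspace_iff.2 heig
  obtain rfl : w = (star T₁ * T₀) v := hw
  have hnorm := norm_sq_star_mul_apply_of_mem_eigenspace h₀ h₁ hsum hv'
  refine ⟨mem_eigenspace_iff.1 (star_mul_apply_mem_eigenspace_star_mul_self h₀ h₁ hcross hv'),
    hnorm, fun hw ↦ ?_⟩
  have hpos : 0 < lam * (1 - lam) * ‖v‖ ^ 2 := by
    have := sub_pos.2 hlam1
    have := norm_pos_iff.2 hv
    positivity
  rw [hw, norm_zero] at hnorm
  linarith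
end

section
/- For two complex structures J₀ and J₁ on ℝ^{2n}, the real multiplicity of every eigenvalue of (J₀+J₁)² lying in the open interval (-1,0) is divisible by 4. -/
open scoped Quaternion
open Module Module.End Set

/-!
Since `J₀² = J₁² = -1`, we have `(J₀ + J₁)² = J₀J₁ + J₁J₀ - 2`, and the anticommutator
`J₀J₁ + J₁J₀` commutes with `J₀` and `J₁`. Hence the `μ`-eigenspace `E` of `(J₀ + J₁)²` is
invariant under both, and on `E` the anticommutator is the scalar `s = μ + 2`. When `s² < 4`,
`K = (2J₁ + sJ₀) / √(4 - s²)` is a complex structure on `E` anticommuting with `J₀`, so `J₀` and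
`K` make `E` a vector space over the quaternions, and its real dimension is a multiple of `4`.
-/

section ComplexStructures

variable {R : Type*} [Ring R] {a b : R}

theorem add_mul_self_of_mul_self_eq_neg_one (ha : a * a = -1) (hb : b * b = -1) :
    (a + b) * (a + b) = a * b + b * a - 2 := by
  rw [add_mul, mul_add, mul_add, ha, hb, ← one_add_one_eq_two]
  abel

theorem commute_add_mul_self_of_mul_self_eq_neg_one (ha : a * a = -1) (hb : b * b = -1) :
    Commute a ((a + b) * (a + b)) := by
  have hanti : Commute a (a * b + b * a) := by
    rw [Commute, SemiconjBy, mul_add, add_mul, ← mul_assoc, ha, mul_assoc, mul_assoc, ha]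
    noncomm_ring
  rw [add_mul_self_of_mul_self_eq_neg_one ha hb]
  exact hanti.sub_right (Commute.ofNat_right a 2)

end ComplexStructures

theorem nonempty_quaternionBasis_of_anticommutator {A : Type*} [Ring A] [Algebra ℝ A] {i j : A}
    {s : ℝ} (hi : i * i = -1) (hj : j * j = -1) (hij : i * j + j * i = algebraMap ℝ A s)
    (hs : s ^ 2 < 4) : Nonempty (QuaternionAlgebra.Basis A (-1 : ℝ) 0 (-1)) := by
  rw [Algebra.algebraMap_eq_smul_one] at hij
  set t := √(4 - s ^ 2)
  have ht : t ^ 2 = 4 - s ^ 2 := Real.sq_sqrt (by linarith)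
  have ht0 : t ≠ 0 := (Real.sqrt_pos.mpr (by linarith)).ne'
  set k := t⁻¹ • ((2 : ℝ) • j + s • i)
  have hkk : k * k = -1 := by
    have hsq : ((2 : ℝ) • j + s • i) * ((2 : ℝ) • j + s • i) = (-t ^ 2) • 1 := by
      simp only [add_mul, mul_add, smul_mul_smul, hi, hj, ht]
      linear_combination (norm := module) (2 * s) • hij
    have hscal : t⁻¹ * t⁻¹ * -t ^ 2 = -1 := by field_simp
    rw [smul_mul_smul, hsq, smul_smul, hscal, neg_one_smul]
  have hik : k * i = -(i * k) := by
    simp only [k, smul_mul_assoc, mul_smul_comm, add_mul, mul_add, hi]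
    linear_combination (norm := module) (t⁻¹ * 2) • hij
  exact ⟨{ i := i, j := k, k := i * k
           i_mul_i := by simp [hi]
           j_mul_j := by simp [hkk]
           i_mul_j := rfl
           j_mul_i := by simp [hik] }⟩

theorem four_dvd_finrank_of_quaternionBasis {V : Type*} [AddCommGroup V] [Module ℝ V]
    (q : QuaternionAlgebra.Basis (End ℝ V) (-1 : ℝ) 0 (-1)) : 4 ∣ finrank ℝ V := by
  let _ : Module ℍ[ℝ] V := Module.compHom V q.liftHom.toRingHom
  have : IsScalarTower ℝ ℍ[ℝ] V :=
    ⟨fun r a v => LinearMap.congr_fun (map_smul q.liftHom r a) v⟩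
  have h := Module.finrank_mul_finrank ℝ ℍ[ℝ] V
  rw [Quaternion.finrank_eq_four] at h
  exact ⟨finrank ℍ[ℝ] V, h.symm⟩

theorem Module.End.four_dvd_finrank_eigenspace_add_mul_self {V : Type*} [AddCommGroup V]
    [Module ℝ V] {J₀ J₁ : End ℝ V} (h₀ : J₀ * J₀ = -1) (h₁ : J₁ * J₁ = -1) {μ : ℝ}
    (hμ₀ : -4 < μ) (hμ₁ : μ < 0) : 4 ∣ finrank ℝ (eigenspace ((J₀ + J₁) * (J₀ + J₁)) μ) := by
  set E := eigenspace ((J₀ + J₁) * (J₀ + J₁)) μ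
  have hE₀ : MapsTo J₀ E E :=
    mapsTo_genEigenspace_of_comm (commute_add_mul_self_of_mul_self_eq_neg_one h₀ h₁).symm μ 1
  have hE₁ : MapsTo J₁ E E := by
    have := commute_add_mul_self_of_mul_self_eq_neg_one h₁ h₀
    rw [add_comm] at this
    exact mapsTo_genEigenspace_of_comm this.symm μ 1
  have hI : J₀.restrict hE₀ * J₀.restrict hE₀ = -1 := by ext x; exact congr($h₀ x)
  have hJ : J₁.restrict hE₁ * J₁.restrict hE₁ = -1 := by ext x; exact congr($h₁ x)
  have hIJ : J₀.restrict hE₀ * J₁.restrict hE₁ + J₁.restrict hE₁ * J₀.restrict hE₀ =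
      algebraMap ℝ (End ℝ E) (μ + 2) := by
    ext x
    have hx := mem_eigenspace_iff.mp x.2
    rw [add_mul_self_of_mul_self_eq_neg_one h₀ h₁] at hx
    simp only [LinearMap.sub_apply, LinearMap.add_apply, mul_apply, ofNat_apply] at hx
    change J₀ (J₁ x) + J₁ (J₀ x) = (μ + 2) • (x : V)
    linear_combination (norm := module) hx
  exact four_dvd_finrank_of_quaternionBasis
    (nonempty_quaternionBasis_of_anticommutator hI hJ hIJ (by nlinarith)).some

theorem eigenspace_multiplicity_div_four_general (n : ℕ)
    (J₀ J₁ : EuclideanSpace ℝ (Fin (2 * n)) →ₗ[ℝ] EuclideanSpace ℝ (Fin (2 * n)))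
    (h0sq : J₀ ∘ₗ J₀ = -LinearMap.id)
    (h1sq : J₁ ∘ₗ J₁ = -LinearMap.id)
    (mu : ℝ) (hmu0 : -1 < mu) (hmu1 : mu < 0) :
    4 ∣ Module.finrank ℝ
      (Module.End.eigenspace ((J₀ + J₁) ∘ₗ (J₀ + J₁) : Module.End ℝ
        (EuclideanSpace ℝ (Fin (2 * n)))) mu) :=
  four_dvd_finrank_eigenspace_add_mul_self h0sq h1sq (by linarith) hmu1

/-- For two complex structures `J₀, J₁` on `ℝ^{2n}`, the real multiplicity of every
eigenvalue of `(J₀+J₁)²` lying in `(-1,0)` is divisible by `4`. -/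
theorem eigenspace_multiplicity_div_four (n : ℕ)
    (J₀ J₁ : EuclideanSpace ℝ (Fin (2 * n)) →ₗ[ℝ] EuclideanSpace ℝ (Fin (2 * n)))
    (h0sq : J₀ ∘ₗ J₀ = -LinearMap.id) (h0sk : LinearMap.adjoint J₀ = -J₀)
    (h1sq : J₁ ∘ₗ J₁ = -LinearMap.id) (h1sk : LinearMap.adjoint J₁ = -J₁)
    (mu : ℝ) (hmu0 : -1 < mu) (hmu1 : mu < 0) :
    4 ∣ Module.finrank ℝ
      (Module.End.eigenspace ((J₀ + J₁) ∘ₗ (J₀ + J₁) : Module.End ℝ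
        (EuclideanSpace ℝ (Fin (2 * n)))) mu) :=
  eigenspace_multiplicity_div_four_general n J₀ J₁ h0sq h1sq mu hmu0 hmu1
end

section
/- Let Q, Q' be orthogonal projections on a real Hilbert space with ‖Q - Q'‖ < ε for some ε < 1/2, and let V : ran Q → ran Q' be defined by V v = Q' v. Then V is a bijection, ‖V‖ ≤ 1, ‖V⁻¹‖ < 1+2ε, and ‖VᵀV - 1‖ < 2ε as well as ‖VVᵀ - 1‖ < 2ε. -/
open ContinuousLinearMap

/-! Let `δ = ‖Q - Q'‖`. For `v ∈ E` we have `(Q - Q') v = v - V v`, so `V` moves `v` by at most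
`δ ‖v‖`. The adjoint of `V` is the compression `E' → E`, and `VᵀV - 1 = Q (Q' - 1)`
on `E`, so `‖VᵀV - 1‖ ≤ δ` and symmetrically `‖VVᵀ - 1‖ ≤ δ`. As `δ < 1`, Neumann series make
`VᵀV` and `VVᵀ` invertible, so `V` has a two-sided inverse, of norm at most `(1 - δ)⁻¹`
since `‖V v‖ ≥ (1 - δ) ‖v‖`. -/

section TwoSidedInverse

variable {𝕜 X Y : Type*} [NontriviallyNormedField 𝕜]
  [NormedAddCommGroup X] [NormedSpace 𝕜 X] [NormedAddCommGroup Y] [NormedSpace 𝕜 Y]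

theorem norm_le_inv_of_comp_eq_one {A : X →L[𝕜] Y} {W : Y →L[𝕜] X} (hAW : A ∘L W = 1)
    {c : ℝ} (hc : 0 < c) (hA : ∀ x, c * ‖x‖ ≤ ‖A x‖) : ‖W‖ ≤ c⁻¹ := by
  refine opNorm_le_bound _ (inv_nonneg.mpr hc.le) fun y => ?_
  have hy : A (W y) = y := by simpa using congr($hAW y)
  rw [inv_mul_eq_div, le_div_iff₀ hc, mul_comm]
  simpa [hy] using hA (W y)

variable [CompleteSpace X] [CompleteSpace Y]

theorem isUnit_of_norm_sub_one_lt_one {T : X →L[𝕜] X} (hT : ‖T - 1‖ < 1) : IsUnit T := by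
  simpa using isUnit_one_sub_of_norm_lt_one (x := 1 - T) (by rwa [norm_sub_rev])

theorem exists_inverse_of_norm_comp_sub_one_lt_one (A : X →L[𝕜] Y) (B : Y →L[𝕜] X)
    (hBA : ‖B ∘L A - 1‖ < 1) (hAB : ‖A ∘L B - 1‖ < 1) :
    ∃ W : Y →L[𝕜] X, W ∘L A = 1 ∧ A ∘L W = 1 := by
  obtain ⟨u, hu⟩ := isUnit_of_norm_sub_one_lt_one hBA
  obtain ⟨u', hu'⟩ := isUnit_of_norm_sub_one_lt_one hAB
  set L : Y →L[𝕜] X := ↑u⁻¹ ∘L B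
  set R : Y →L[𝕜] X := B ∘L ↑u'⁻¹
  have hLA : L ∘L A = 1 := by rw [comp_assoc, ← hu, ← mul_def, u.inv_mul]
  have hAR : A ∘L R = 1 := by rw [← comp_assoc, ← hu', ← mul_def, u'.mul_inv]
  refine ⟨L, hLA, ?_⟩
  calc A ∘L L = A ∘L (L ∘L A) ∘L R := by rw [comp_assoc, comp_assoc, hAR, one_def, comp_id]
    _ = 1 := by rw [hLA, one_def, id_comp, hAR]

end TwoSidedInverse

namespace Submodule

variable {𝕜 H : Type*} [RCLike 𝕜] [NormedAddCommGroup H] [InnerProductSpace 𝕜 H]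
  (K K' : Submodule 𝕜 H)

noncomputable def compression [K'.HasOrthogonalProjection] : K →L[𝕜] K' :=
  K'.orthogonalProjectionOnto ∘L K.subtypeL

theorem adjoint_compression [CompleteSpace K] [CompleteSpace K'] :
    adjoint (K.compression K') = K'.compression K :=
  ((eq_adjoint_iff _ _).mpr fun w v => by simp [compression]).symm

variable [K'.HasOrthogonalProjection]

theorem norm_compression_le : ‖K.compression K'‖ ≤ 1 :=
  (opNorm_comp_le _ _).trans <| by
    simpa using mul_le_one₀ K'.orthogonalProjectionOnto_norm_le (norm_nonneg _) K.norm_subtypeL_le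

variable [K.HasOrthogonalProjection]

theorem norm_compression_apply_sub_le (v : K) :
    ‖(K.compression K' v : H) - v‖ ≤ ‖K.starProjection - K'.starProjection‖ * ‖v‖ := by
  have h : (K.starProjection - K'.starProjection) v = (v : H) - K.compression K' v := by
    simp [compression, starProjection_eq_self_iff.mpr v.2]
  rw [norm_sub_rev, ← h]
  exact le_opNorm _ _

theorem norm_compression_comp_compression_sub_one_le :
    ‖K'.compression K ∘L K.compression K' - 1‖ ≤ ‖K.starProjection - K'.starProjection‖ := by
  refine opNorm_le_bound _ (norm_nonneg _) fun v => ?_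
  have h : (K'.compression K ∘L K.compression K' - 1) v
      = K.orthogonalProjectionOnto ((K.compression K' v : H) - v) := by
    simp [compression, map_sub, orthogonalProjectionOnto_mem_subspace_eq_self]
  rw [h]
  exact (K.norm_orthogonalProjectionOnto_apply_le _).trans (K.norm_compression_apply_sub_le K' v)

theorem one_sub_mul_norm_le_norm_compression_apply (v : K) :
    (1 - ‖K.starProjection - K'.starProjection‖) * ‖v‖ ≤ ‖K.compression K' v‖ := by
  have hsub := K.norm_compression_apply_sub_le K' v
  have htri := norm_sub_norm_le (v : H) (K.compression K' v)
  rw [norm_sub_rev] at htri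
  change _ * ‖(v : H)‖ ≤ ‖(K.compression K' v : H)‖
  change _ ≤ _ * ‖(v : H)‖ at hsub
  linarith

end Submodule

theorem projection_compression_isomorphism_general {H : Type*} [NormedAddCommGroup H]
    [InnerProductSpace ℝ H]
    (E E' : Submodule ℝ H) [CompleteSpace E] [CompleteSpace E']
    (ε : ℝ) (hε : ε < 1 / 2)
    (hQQ' : ‖(E.subtypeL ∘L E.orthogonalProjectionOnto : H →L[ℝ] H) -
      (E'.subtypeL ∘L E'.orthogonalProjectionOnto : H →L[ℝ] H)‖ < ε)
    (V : E →L[ℝ] E') (hV : V = E'.orthogonalProjectionOnto ∘L E.subtypeL) :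
    Function.Bijective V ∧ ‖V‖ ≤ 1 ∧
    (∃ W : E' →L[ℝ] E, W ∘L V = 1 ∧ V ∘L W = 1 ∧ ‖W‖ < 1 + 2 * ε) ∧
    ‖adjoint V ∘L V - 1‖ < 2 * ε ∧ ‖V ∘L adjoint V - 1‖ < 2 * ε := by
  change V = E.compression E' at hV
  change ‖E.starProjection - E'.starProjection‖ < ε at hQQ'
  subst hV
  set δ := ‖E.starProjection - E'.starProjection‖
  have hδ : 0 ≤ δ := norm_nonneg _
  have hVV : ‖E'.compression E ∘L E.compression E' - 1‖ ≤ δ :=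
    E.norm_compression_comp_compression_sub_one_le E'
  have hVV' : ‖E.compression E' ∘L E'.compression E - 1‖ ≤ δ := by
    simpa only [norm_sub_rev E'.starProjection] using
      E'.norm_compression_comp_compression_sub_one_le E
  obtain ⟨W, hWV, hVW⟩ := exists_inverse_of_norm_comp_sub_one_lt_one _ _
    (hVV.trans_lt (by linarith)) (hVV'.trans_lt (by linarith))
  have hW : ‖W‖ ≤ (1 - δ)⁻¹ := norm_le_inv_of_comp_eq_one hVW (by linarith)
    (E.one_sub_mul_norm_le_norm_compression_apply E')
  have hδε : (1 - δ)⁻¹ < 1 + 2 * ε := by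
    -- `(1 + 2ε)(1 - δ) > (1 + 2ε)(1 - ε) = 1 + ε (1 - 2ε) ≥ 1`
    rw [inv_lt_iff_one_lt_mul₀ (by linarith)]
    nlinarith
  rw [E.adjoint_compression E']
  exact ⟨Function.bijective_iff_has_inverse.mpr
      ⟨W, fun v => congr($hWV v), fun w => congr($hVW w)⟩,
    E.norm_compression_le E', ⟨W, hWV, hVW, hW.trans_lt hδε⟩, by linarith, by linarith⟩

/-- If two orthogonal projections `Q, Q'` onto closed subspaces `E, E'` of a real
Hilbert space satisfy `‖Q - Q'‖ < ε < 1/2`, then the map `V : E → E'`, `V v = Q' v`,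
is a bijection with `‖V‖ ≤ 1`, `‖V⁻¹‖ < 1 + 2ε`, and
`‖VᵀV - 1‖ < 2ε`, `‖VVᵀ - 1‖ < 2ε`. -/
theorem projection_compression_isomorphism {H : Type*} [NormedAddCommGroup H]
    [InnerProductSpace ℝ H] [CompleteSpace H]
    (E E' : Submodule ℝ H) [CompleteSpace E] [CompleteSpace E']
    (ε : ℝ) (hε : ε < 1 / 2)
    (hQQ' : ‖(E.subtypeL ∘L E.orthogonalProjectionOnto : H →L[ℝ] H) -
      (E'.subtypeL ∘L E'.orthogonalProjectionOnto : H →L[ℝ] H)‖ < ε)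
    (V : E →L[ℝ] E') (hV : V = E'.orthogonalProjectionOnto ∘L E.subtypeL) :
    Function.Bijective V ∧ ‖V‖ ≤ 1 ∧
    (∃ W : E' →L[ℝ] E, W ∘L V = 1 ∧ V ∘L W = 1 ∧ ‖W‖ < 1 + 2 * ε) ∧
    ‖adjoint V ∘L V - 1‖ < 2 * ε ∧ ‖V ∘L adjoint V - 1‖ < 2 * ε :=
  projection_compression_isomorphism_general E E' ε hε hQQ' V hV
end

section
/- Let E, E', E'' be closed subspaces of a real Hilbert space with orthogonal projections Q, Q', Q'' satisfying ‖Q-Q'‖ < ε, ‖Q'-Q''‖ < ε, ‖Q''-Q‖ < ε for some ε < 1/2. Define V : E → E', V' : E' → E'', V'' : E'' → E by orthogonal projection. Then ‖V''((V')ᵀ)⁻¹ V - 1_E‖ < 5ε. -/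
/-!
Write `Q, Q', Q'' : H → H` and `P, P', P''` (with values in `E, E', E''`) for the orthogonal
projections. The adjoint of `V'` is the restriction of `P'` to `E''`, and it moves each `z ∈ E''`
by at most `‖Q' - Q''‖ ‖z‖ < ‖z‖ / 2`, so its inverse has norm at most `2`. For `x ∈ E` put
`s = P'' x`; then `V'' W V x - x = V'' W (V x - (V')ᵀ s) + (V'' s - x)`, and both
`V x - (V')ᵀ s = P' (x - Q'' x)` and `V'' s - x = P (Q'' x - x)` have norm at most
`‖Q'' x - x‖ = ‖(Q'' - Q) x‖ ≤ ε ‖x‖`. Hence the operator has norm at most `(2 + 1) ε`.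
-/

open ContinuousLinearMap

namespace ContinuousLinearMap

variable {𝕜 F G : Type*} [NontriviallyNormedField 𝕜] [NormedAddCommGroup F] [NormedSpace 𝕜 F]
  [NormedAddCommGroup G] [NormedSpace 𝕜 G]

theorem opNorm_le_inv_of_comp_eq_one {A : F →L[𝕜] G} {W : G →L[𝕜] F} (hAW : A ∘L W = 1)
    {c : ℝ} (hc : 0 < c) (hA : ∀ z, c * ‖z‖ ≤ ‖A z‖) : ‖W‖ ≤ c⁻¹ := by
  refine opNorm_le_bound _ (inv_nonneg.2 hc.le) fun y => ?_
  have hAWy : A (W y) = y := congr($hAW y)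
  rw [inv_mul_eq_div, le_div_iff₀' hc]
  simpa only [hAWy] using hA (W y)

end ContinuousLinearMap

namespace Submodule

variable {𝕜 H : Type*} [RCLike 𝕜] [NormedAddCommGroup H] [InnerProductSpace 𝕜 H]

theorem adjoint_orthogonalProjectionOnto_comp_subtypeL (K L : Submodule 𝕜 H)
    [CompleteSpace K] [CompleteSpace L] :
    adjoint (L.orthogonalProjectionOnto ∘L K.subtypeL) = K.orthogonalProjectionOnto ∘L L.subtypeL :=
  ((eq_adjoint_iff _ _).2 fun z x => by simp).symm

variable (K L M : Submodule 𝕜 H) [K.HasOrthogonalProjection] [L.HasOrthogonalProjection]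
  [M.HasOrthogonalProjection]

theorem norm_starProjection_sub_self_le {x : H} (hx : x ∈ K) :
    ‖L.starProjection x - x‖ ≤ ‖L.starProjection - K.starProjection‖ * ‖x‖ := by
  calc ‖L.starProjection x - x‖ = ‖(L.starProjection - K.starProjection) x‖ := by
        rw [sub_apply, K.starProjection_eq_self_iff.2 hx]
    _ ≤ _ := le_opNorm _ x

theorem norm_orthogonalProjectionOnto_starProjection_sub_le (x : K) :
    ‖M.orthogonalProjectionOnto (L.starProjection x) - M.orthogonalProjectionOnto x‖ ≤
      ‖L.starProjection - K.starProjection‖ * ‖x‖ := by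
  rw [← map_sub]
  exact (M.norm_orthogonalProjectionOnto_apply_le _).trans
    (norm_starProjection_sub_self_le K L x.2)

theorem one_sub_norm_starProjection_sub_mul_le_norm_orthogonalProjectionOnto (z : L) :
    (1 - ‖K.starProjection - L.starProjection‖) * ‖z‖ ≤ ‖K.orthogonalProjectionOnto z‖ := by
  have hmove := norm_starProjection_sub_self_le L K z.2
  have hrev := norm_sub_norm_le (z : H) (K.starProjection z)
  rw [norm_sub_rev] at hrev
  simp only [starProjection_apply, norm_coe] at hmove hrev ⊢
  linarith

theorem norm_compression_comp_comp_sub_one_le (K₁ K₂ K₃ : Submodule 𝕜 H)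
    [K₁.HasOrthogonalProjection] [K₂.HasOrthogonalProjection] [K₃.HasOrthogonalProjection]
    (W : K₂ →L[𝕜] K₃) (hW : W ∘L (K₂.orthogonalProjectionOnto ∘L K₃.subtypeL) = 1) :
    ‖(K₁.orthogonalProjectionOnto ∘L K₃.subtypeL) ∘L W ∘L
        (K₂.orthogonalProjectionOnto ∘L K₁.subtypeL) - 1‖ ≤
      (‖W‖ + 1) * ‖K₃.starProjection - K₁.starProjection‖ := by
  set δ := ‖K₃.starProjection - K₁.starProjection‖
  refine opNorm_le_bound _ (by positivity) fun x => ?_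
  set s := K₃.orthogonalProjectionOnto (x : H)
  set d := K₂.orthogonalProjectionOnto (x : H) - K₂.orthogonalProjectionOnto (K₃.starProjection x)
  have hWs : W (K₂.orthogonalProjectionOnto s) = s := congr($hW s)
  have hdecomp : ((K₁.orthogonalProjectionOnto ∘L K₃.subtypeL) ∘L W ∘L
      (K₂.orthogonalProjectionOnto ∘L K₁.subtypeL) - 1) x =
        K₁.orthogonalProjectionOnto (W d : H) +
          (K₁.orthogonalProjectionOnto (K₃.starProjection x) - K₁.orthogonalProjectionOnto x) := by
    simp only [d, sub_apply, comp_apply, one_apply_eq_self, map_sub, coe_subtypeL,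
      coe_subtype, starProjection_apply, hWs, s, AddSubgroupClass.coe_sub,
      orthogonalProjectionOnto_mem_subspace_eq_self]
    abel
  have hd : ‖d‖ ≤ δ * ‖x‖ := by
    rw [norm_sub_rev]
    exact norm_orthogonalProjectionOnto_starProjection_sub_le K₁ K₃ K₂ x
  rw [hdecomp]
  calc _ ≤ ‖K₁.orthogonalProjectionOnto (W d : H)‖ + δ * ‖x‖ := by
        grw [norm_add_le, norm_orthogonalProjectionOnto_starProjection_sub_le K₁ K₃ K₁ x]
    _ ≤ ‖W‖ * (δ * ‖x‖) + δ * ‖x‖ := by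
        gcongr
        exact (K₁.norm_orthogonalProjectionOnto_apply_le _).trans ((le_opNorm W d).trans (by gcongr))
    _ = (‖W‖ + 1) * δ * ‖x‖ := by ring

end Submodule

open Submodule in
theorem triple_projection_compression_estimate_general {H : Type*} [NormedAddCommGroup H]
    [InnerProductSpace ℝ H]
    (E E' E'' : Submodule ℝ H) [CompleteSpace E] [CompleteSpace E'] [CompleteSpace E'']
    (ε : ℝ) (hε : ε < 1 / 2)
    (h2 : ‖(E'.subtypeL ∘L E'.orthogonalProjectionOnto : H →L[ℝ] H) -
      (E''.subtypeL ∘L E''.orthogonalProjectionOnto : H →L[ℝ] H)‖ < ε)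
    (h3 : ‖(E''.subtypeL ∘L E''.orthogonalProjectionOnto : H →L[ℝ] H) -
      (E.subtypeL ∘L E.orthogonalProjectionOnto : H →L[ℝ] H)‖ < ε)
    (V : E →L[ℝ] E') (hV : V = E'.orthogonalProjectionOnto ∘L E.subtypeL)
    (V' : E' →L[ℝ] E'') (hV' : V' = E''.orthogonalProjectionOnto ∘L E'.subtypeL)
    (V'' : E'' →L[ℝ] E) (hV'' : V'' = E.orthogonalProjectionOnto ∘L E''.subtypeL)
    -- `W` is the inverse of the adjoint `(V')ᵀ : E'' → E'`
    (W : E' →L[ℝ] E'') (hW1 : W ∘L adjoint V' = 1) (hW2 : adjoint V' ∘L W = 1) :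
    ‖V'' ∘L W ∘L V - 1‖ < 5 * ε := by
  subst hV hV' hV''
  rw [adjoint_orthogonalProjectionOnto_comp_subtypeL] at hW1 hW2
  change ‖E'.starProjection - E''.starProjection‖ < ε at h2
  change ‖E''.starProjection - E.starProjection‖ < ε at h3
  have hε₀ : 0 < ε := (norm_nonneg _).trans_lt h3
  have hW : ‖W‖ ≤ 2 := by
    have hlow (z : E'') : (1 - ε) * ‖z‖ ≤ ‖E'.orthogonalProjectionOnto z‖ :=
      (mul_le_mul_of_nonneg_right (by linarith) (norm_nonneg z)).trans
        (one_sub_norm_starProjection_sub_mul_le_norm_orthogonalProjectionOnto E' E'' z)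
    refine (opNorm_le_inv_of_comp_eq_one hW2 (by linarith) hlow).trans ?_
    rw [inv_le_comm₀ (by linarith) two_pos]
    linarith
  calc _ ≤ (‖W‖ + 1) * ‖E''.starProjection - E.starProjection‖ :=
        norm_compression_comp_comp_sub_one_le E E' E'' W hW1
    _ ≤ 3 * ε := by nlinarith [norm_nonneg W, norm_nonneg (E''.starProjection - E.starProjection)]
    _ < 5 * ε := by linarith

/-- For three closed subspaces `E, E', E''` whose orthogonal projections are pairwise
`ε`-close (`ε < 1/2`), the compressions `V : E → E'`, `V' : E' → E''`, `V'' : E'' → E`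
satisfy `‖V'' ((V')ᵀ)⁻¹ V - 1‖ < 5ε`. -/
theorem triple_projection_compression_estimate {H : Type*} [NormedAddCommGroup H]
    [InnerProductSpace ℝ H] [CompleteSpace H]
    (E E' E'' : Submodule ℝ H) [CompleteSpace E] [CompleteSpace E'] [CompleteSpace E'']
    (ε : ℝ) (hε : ε < 1 / 2)
    (h1 : ‖(E.subtypeL ∘L E.orthogonalProjectionOnto : H →L[ℝ] H) -
      (E'.subtypeL ∘L E'.orthogonalProjectionOnto : H →L[ℝ] H)‖ < ε)
    (h2 : ‖(E'.subtypeL ∘L E'.orthogonalProjectionOnto : H →L[ℝ] H) -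
      (E''.subtypeL ∘L E''.orthogonalProjectionOnto : H →L[ℝ] H)‖ < ε)
    (h3 : ‖(E''.subtypeL ∘L E''.orthogonalProjectionOnto : H →L[ℝ] H) -
      (E.subtypeL ∘L E.orthogonalProjectionOnto : H →L[ℝ] H)‖ < ε)
    (V : E →L[ℝ] E') (hV : V = E'.orthogonalProjectionOnto ∘L E.subtypeL)
    (V' : E' →L[ℝ] E'') (hV' : V' = E''.orthogonalProjectionOnto ∘L E'.subtypeL)
    (V'' : E'' →L[ℝ] E) (hV'' : V'' = E.orthogonalProjectionOnto ∘L E''.subtypeL)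
    -- `W` is the inverse of the adjoint `(V')ᵀ : E'' → E'`
    (W : E' →L[ℝ] E'') (hW1 : W ∘L adjoint V' = 1) (hW2 : adjoint V' ∘L W = 1) :
    ‖V'' ∘L W ∘L V - 1‖ < 5 * ε :=
  triple_projection_compression_estimate_general E E' E'' ε hε h2 h3 V hV V' hV' V'' hV'' W hW1 hW2
end

section
/- Let J₀ and J₁ be complex structures on a real Hilbert space such that the image of J₀ - J₁ in the Calkin algebra has norm at most c < 1. Then for t ∈ [0,1], T_t = (1-t)J₀ + tJ₁ is a skew-adjoint Fredholm operator, and moreover 0 ∈ σ(T_t) implies t = 1/2. -/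
/-!
Writing `T = (1 - t) • J₀ + t • J₁` and `D = J₀ - J₁`, the relations `Jᵢ² = -1` give
`T² = -(1 + t(1 - t) D²)`, with `0 ≤ t(1 - t) ≤ 1/4`. Modulo compacts `D` is represented by
an operator of norm `< 2`, so `T²`, and with it `T`, is invertible in the Calkin algebra.
The `Jᵢ` are isometries, so `‖D‖ ≤ 2`, and for `t ≠ 1/2` we have `t(1 - t) < 1/4`: then the
Neumann series makes `T²`, hence `T`, invertible.
-/

open ContinuousLinearMap AffineMap Set

namespace TwoSidedIdeal

variable {R : Type*} [Ring R] (I : TwoSidedIdeal R)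

theorem mk'_eq_mk'_iff {x y : R} : I.ringCon.mk' x = I.ringCon.mk' y ↔ x - y ∈ I := by
  rw [RingCon.coe_mk', RingCon.eq, rel_iff]

theorem exists_mul_eq_one_add_of_isUnit_mk' {x : R} (hx : IsUnit (I.ringCon.mk' x)) :
    ∃ s k₁ k₂ : R, k₁ ∈ I ∧ k₂ ∈ I ∧ s * x = 1 + k₁ ∧ x * s = 1 + k₂ := by
  obtain ⟨u, hu⟩ := hx
  obtain ⟨s, hs⟩ := RingCon.mk'_surjective (c := I.ringCon) (↑u⁻¹ : I.ringCon.Quotient)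
  have hsx : I.ringCon.mk' (s * x) = I.ringCon.mk' 1 := by
    rw [map_mul, map_one, hs, ← hu, Units.inv_mul]
  have hxs : I.ringCon.mk' (x * s) = I.ringCon.mk' 1 := by
    rw [map_mul, map_one, hs, ← hu, Units.mul_inv]
  rw [mk'_eq_mk'_iff] at hsx hxs
  exact ⟨s, _, _, hsx, hxs, (add_sub_cancel _ _).symm, (add_sub_cancel _ _).symm⟩

theorem mul_self_sub_mul_self_mem {x y : R} (h : x - y ∈ I) : x * x - y * y ∈ I := by
  have : x * x - y * y = x * (x - y) + (x - y) * y := by noncomm_ring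
  rw [this]
  exact I.add_mem (I.mul_mem_left _ _ h) (I.mul_mem_right _ _ h)

end TwoSidedIdeal

def compactOperatorIdeal (𝕜 E : Type*) [NontriviallyNormedField 𝕜] [NormedAddCommGroup E]
    [NormedSpace 𝕜 E] : TwoSidedIdeal (E →L[𝕜] E) :=
  .mk' {K | IsCompactOperator K} isCompactOperator_zero .add .neg
    (fun hK ↦ hK.clm_comp _) (fun hK ↦ hK.comp_clm _)

theorem mem_compactOperatorIdeal {𝕜 E : Type*} [NontriviallyNormedField 𝕜] [NormedAddCommGroup E]
    [NormedSpace 𝕜 E] {K : E →L[𝕜] E} :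
    K ∈ compactOperatorIdeal 𝕜 E ↔ IsCompactOperator K :=
  TwoSidedIdeal.mem_mk' ..

theorem isUnit_of_isUnit_mul_self {M : Type*} [Monoid M] {x : M} (h : IsUnit (x * x)) : IsUnit x :=
  (isUnit_pow_iff two_ne_zero).mp (by rwa [sq])

theorem ContinuousLinearMap.norm_le_one_of_adjoint_comp_self_eq_one {𝕜 E F : Type*} [RCLike 𝕜]
    [NormedAddCommGroup E] [InnerProductSpace 𝕜 E] [CompleteSpace E]
    [NormedAddCommGroup F] [InnerProductSpace 𝕜 F] [CompleteSpace F]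
    {u : E →L[𝕜] F} (h : adjoint u ∘L u = 1) : ‖u‖ ≤ 1 :=
  u.opNorm_le_bound zero_le_one fun x ↦ by
    rw [(norm_map_iff_adjoint_comp_self u).mpr h x, one_mul]

section LineMap

variable {A : Type*} [Ring A] [Algebra ℝ A] {J₀ J₁ : A}

theorem lineMap_mul_self_of_mul_self_eq_neg_one (h₀ : J₀ * J₀ = -1) (h₁ : J₁ * J₁ = -1) (t : ℝ) :
    lineMap J₀ J₁ t * lineMap J₀ J₁ t = -(1 + (t * (1 - t)) • ((J₀ - J₁) * (J₀ - J₁))) := by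
  simp only [lineMap_apply_module, add_mul, mul_add, sub_mul, mul_sub, smul_mul_assoc,
    mul_smul_comm, h₀, h₁]
  module

end LineMap

section Banach

variable {A : Type*} [NormedRing A] [NormedAlgebra ℝ A] [CompleteSpace A] {J₀ J₁ : A}

theorem isUnit_one_add_smul_mul_self {a : ℝ} {X : A} (ha : 0 ≤ a) (h : a * ‖X‖ ^ 2 < 1) :
    IsUnit (1 + a • (X * X)) := by
  rw [← sub_neg_eq_add]
  refine isUnit_one_sub_of_norm_lt_one ?_
  calc ‖-(a • (X * X))‖ ≤ a * (‖X‖ * ‖X‖) := by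
        rw [norm_neg, norm_smul, Real.norm_of_nonneg ha]
        exact mul_le_mul_of_nonneg_left (norm_mul_le X X) ha
    _ < 1 := by rwa [← sq]

theorem isUnit_lineMap_of_norm_le_one (h₀ : J₀ * J₀ = -1) (h₁ : J₁ * J₁ = -1)
    (hn₀ : ‖J₀‖ ≤ 1) (hn₁ : ‖J₁‖ ≤ 1) {t : ℝ} (ht : t ∈ Icc 0 1) (ht' : t ≠ 1 / 2) :
    IsUnit (lineMap J₀ J₁ t) := by
  refine isUnit_of_isUnit_mul_self ?_
  rw [lineMap_mul_self_of_mul_self_eq_neg_one h₀ h₁]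
  have hD : ‖J₀ - J₁‖ ≤ 2 := (norm_sub_le J₀ J₁).trans (by linarith)
  have h2t : 0 < (1 - 2 * t) ^ 2 := by
    have : 1 - 2 * t ≠ 0 := fun h ↦ ht' (by linarith)
    positivity
  have ha : 0 ≤ t * (1 - t) := mul_nonneg ht.1 (by linarith [ht.2])
  refine (isUnit_one_add_smul_mul_self ha ?_).neg
  calc t * (1 - t) * ‖J₀ - J₁‖ ^ 2 ≤ t * (1 - t) * 2 ^ 2 := by gcongr
    _ < 1 := by linarith

theorem isUnit_mk'_lineMap_of_norm_sub_sub_lt_two (I : TwoSidedIdeal A) (h₀ : J₀ * J₀ = -1)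
    (h₁ : J₁ * J₁ = -1) {K : A} (hK : K ∈ I) (hR : ‖J₀ - J₁ - K‖ < 2) {t : ℝ} (ht : t ∈ Icc 0 1) :
    IsUnit (I.ringCon.mk' (lineMap J₀ J₁ t)) := by
  set R := J₀ - J₁ - K
  set a := t * (1 - t)
  have ha : 0 ≤ a := mul_nonneg ht.1 (by linarith [ht.2])
  have hunit : IsUnit (-(1 + a • (R * R))) := by
    refine (isUnit_one_add_smul_mul_self ha ?_).neg
    nlinarith [sq_nonneg (1 - 2 * t), norm_nonneg R]
  have hsq : I.ringCon.mk' (lineMap J₀ J₁ t * lineMap J₀ J₁ t) =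
      I.ringCon.mk' (-(1 + a • (R * R))) := by
    have hDR : R * R - (J₀ - J₁) * (J₀ - J₁) ∈ I :=
      I.mul_self_sub_mul_self_mem (by simpa [R] using I.neg_mem hK)
    rw [lineMap_mul_self_of_mul_self_eq_neg_one h₀ h₁, I.mk'_eq_mk'_iff, neg_sub_neg,
      add_sub_add_left_eq_sub, ← smul_sub, ← smul_one_mul]
    exact I.mul_mem_left _ _ hDR
  refine isUnit_of_isUnit_mul_self ?_
  rw [← map_mul, hsq]
  exact hunit.map _

end Banach

/-- If two complex structures `J₀, J₁` on a real Hilbert space satisfy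
`‖π(J₀) - π(J₁)‖ ≤ c < 1` in the Calkin algebra (phrased as: there is a compact `K`
with `‖J₀ - J₁ - K‖ ≤ c`), then each `T_t = (1-t)J₀ + tJ₁`, `t ∈ [0,1]`, is a
skew-adjoint Fredholm operator (invertible modulo compacts), and `0 ∈ σ(T_t)` forces
`t = 1/2`. -/
theorem linear_path_complexStructures_fredholm {H : Type*} [NormedAddCommGroup H]
    [InnerProductSpace ℝ H] [CompleteSpace H]
    (J₀ J₁ : H →L[ℝ] H)
    (h0sq : J₀ * J₀ = -1) (h0sk : adjoint J₀ = -J₀)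
    (h1sq : J₁ * J₁ = -1) (h1sk : adjoint J₁ = -J₁)
    (c : ℝ) (hc : c < 1)
    (hCalkin : ∃ K : H →L[ℝ] H, IsCompactOperator K ∧ ‖J₀ - J₁ - K‖ ≤ c)
    (t : ℝ) (ht0 : 0 ≤ t) (ht1 : t ≤ 1)
    (T : H →L[ℝ] H) (hT : T = (1 - t) • J₀ + t • J₁) :
    adjoint T = -T ∧
    (∃ S : H →L[ℝ] H, ∃ K₁ K₂ : H →L[ℝ] H, IsCompactOperator K₁ ∧
      IsCompactOperator K₂ ∧ S * T = 1 + K₁ ∧ T * S = 1 + K₂) ∧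
    ((0 : ℝ) ∈ spectrum ℝ T → t = 1 / 2) := by
  rw [← lineMap_apply_module] at hT
  subst hT
  have ht : t ∈ Icc 0 1 := ⟨ht0, ht1⟩
  refine ⟨?_, ?_, ?_⟩
  · rw [lineMap_apply_module, map_add, map_smul, map_smul, h0sk, h1sk]
    module
  · obtain ⟨K, hK, hKc⟩ := hCalkin
    simpa only [mem_compactOperatorIdeal] using
      (compactOperatorIdeal ℝ H).exists_mul_eq_one_add_of_isUnit_mk' <|
        isUnit_mk'_lineMap_of_norm_sub_sub_lt_two _ h0sq h1sq
          (mem_compactOperatorIdeal.mpr hK) (by linarith)  ht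
  · intro h0
    by_contra ht'
    have hn₀ : ‖J₀‖ ≤ 1 :=
      norm_le_one_of_adjoint_comp_self_eq_one (by rw [← mul_def, h0sk, neg_mul, h0sq, neg_neg])
    have hn₁ : ‖J₁‖ ≤ 1 :=
      norm_le_one_of_adjoint_comp_self_eq_one (by rw [← mul_def, h1sk, neg_mul, h1sq, neg_neg])
    exact (spectrum.zero_mem_iff ℝ).mp h0 (isUnit_lineMap_of_norm_le_one h0sq h1sq hn₀ hn₁ ht ht')
end
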